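/- The second derivatives of the KL divergence give the Fisher information: fix a probability distribution p̂ on Ω, elements s_i, s_j ∈ S, and θ : Ω → ℝ with θ(s) = 0 for s ∉ S. Then the second partial derivative of (x, y) ↦ D_KL(p̂, p_{θ[s_i ↦ x, s_j ↦ y]}) at (θ(s_i), θ(s_j)) equals g_{ij} = Σ_{ω ∈ Ω, ω ≥ s_i and ω ≥ s_j} p(ω; θ) − η_θ(s_i) η_θ(s_j). -/

import Mathlib

/-!
Along the plane `θ + x eᵢ + y eⱼ` the energy `ω ↦ Σ_{s ≤ ω} ϑ(s)` equals
`a(ω) + x uᵢ(ω) + y uⱼ(ω)` with `uᵢ = 1[sᵢ ≤ ·]`. As `Σ p̂ = 1`, the KL divergence there is a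
constant, minus the `p̂`-mean of the energy, plus the log-partition function
`log Σ_ω exp(energy)`. Its `x`-derivative is the Gibbs mean of `uᵢ` minus a constant, and the
`y`-derivative of a Gibbs mean is a Gibbs covariance. Since `p(·; θ)` is the Gibbs
distribution of `a`, that covariance of indicators is `g_{ij}`.
-/

open Real Finset

section Gibbs

variable {ι : Type*} [Fintype ι]

noncomputable def gibbsMean (a f : ι → ℝ) : ℝ :=
  (∑ i, exp (a i) * f i) / ∑ i, exp (a i)

lemma sum_exp_pos [Nonempty ι] (a : ι → ℝ) : 0 < ∑ i, exp (a i) :=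
  sum_pos (fun i _ => exp_pos (a i)) univ_nonempty

lemma gibbsMean_ite (a : ι → ℝ) (P : ι → Prop) [DecidablePred P] :
    gibbsMean a (fun i => if P i then 1 else 0) = ∑ i ∈ univ.filter P, exp (a i) / ∑ j, exp (a j) := by
  rw [gibbsMean, sum_div, sum_filter]
  refine sum_congr rfl fun i _ => ?_
  split_ifs <;> simp

lemma hasDerivAt_sum_exp_add_mul (a u f : ι → ℝ) :
    HasDerivAt (fun x => ∑ i, exp (a i + x * u i) * f i) (∑ i, exp (a i) * u i * f i) 0 := by
  refine (HasDerivAt.fun_sum fun i _ =>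
    (((hasDerivAt_mul_const (u i)).const_add (a i)).exp).mul_const (f i)).congr_deriv ?_
  simp

lemma hasDerivAt_log_sum_exp [Nonempty ι] (a u : ι → ℝ) :
    HasDerivAt (fun x => log (∑ i, exp (a i + x * u i))) (gibbsMean a u) 0 := by
  have hZ := (hasDerivAt_sum_exp_add_mul a u fun _ => 1).log (by simpa using (sum_exp_pos a).ne')
  simp only [mul_one, zero_mul, add_zero] at hZ
  exact hZ

lemma hasDerivAt_gibbsMean [Nonempty ι] (a u v : ι → ℝ) :
    HasDerivAt (fun y => gibbsMean (fun i => a i + y * v i) u)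
      (gibbsMean a (u * v) - gibbsMean a u * gibbsMean a v) 0 := by
  have h := (hasDerivAt_sum_exp_add_mul a v u).fun_div (hasDerivAt_sum_exp_add_mul a v fun _ => 1)
    (by simpa using (sum_exp_pos a).ne')
  simp only [mul_one, zero_mul, add_zero] at h
  refine h.congr_deriv ?_
  simp only [gibbsMean, Pi.mul_apply, mul_right_comm _ (v _) (u _)]
  field_simp

lemma sum_mul_log_div_exp_sub {q e : ι → ℝ} (c : ℝ) (hq : ∑ i, q i = 1) :
    ∑ i, q i * log (q i / exp (e i - c)) = ∑ i, q i * log (q i) - ∑ i, q i * e i + c := by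
  have hterm : ∀ i, q i * log (q i / exp (e i - c)) = q i * log (q i) - q i * e i + q i * c := by
    intro i
    rcases eq_or_ne (q i) 0 with h | h
    · simp [h]
    · rw [log_div h (exp_ne_zero _), log_exp]
      ring
  rw [sum_congr rfl fun i _ => hterm i, sum_add_distrib, sum_sub_distrib, ← sum_mul, hq, one_mul]

lemma deriv_sub_sum_mul_add_log_sum_exp [Nonempty ι] (C : ℝ) (q b u : ι → ℝ) :
    deriv (fun x => C - ∑ i, q i * (b i + x * u i) + log (∑ i, exp (b i + x * u i))) 0
      = gibbsMean b u - ∑ i, q i * u i := by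
  have hlinear : HasDerivAt (fun x => ∑ i, q i * (b i + x * u i)) (∑ i, q i * u i) 0 :=
    HasDerivAt.fun_sum fun i _ => ((hasDerivAt_mul_const (u i)).const_add (b i)).const_mul (q i)
  rw [(((hasDerivAt_const _ C).fun_sub hlinear).fun_add (hasDerivAt_log_sum_exp b u)).deriv]
  ring

end Gibbs

section LogLinear

variable {Ω : Type*} [PartialOrder Ω] [DecidableEq Ω] {S : Finset Ω}

lemma sum_filter_le_pi_single {t : Ω} (ht : t ∈ S) (c : ℝ) (ω : Ω) [DecidablePred (· ≤ ω)] :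
    ∑ s ∈ S.filter (· ≤ ω), Pi.single t c s = if t ≤ ω then c else 0 := by
  rw [sum_pi_single']
  simp [ht]

lemma sum_filter_le_add_smul_single {si sj : Ω} (hsi : si ∈ S) (hsj : sj ∈ S) (θ : Ω → ℝ)
    (x y : ℝ) (ω : Ω) [DecidablePred (· ≤ ω)] :
    ∑ s ∈ S.filter (· ≤ ω), (θ + x • (Pi.single si 1 : Ω → ℝ) + y • (Pi.single sj 1 : Ω → ℝ)) s
      = ∑ s ∈ S.filter (· ≤ ω), θ s + y * (if sj ≤ ω then 1 else 0)
        + x * (if si ≤ ω then 1 else 0) := by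
  simp only [Pi.add_apply, Pi.smul_apply, smul_eq_mul, sum_add_distrib, ← mul_sum,
    sum_filter_le_pi_single hsi, sum_filter_le_pi_single hsj]
  ring

end LogLinear

open scoped Classical BigOperators

theorem second_deriv_KL_eq_fisher_information_general
    {Ω : Type*} [Fintype Ω] [Nonempty Ω] [PartialOrder Ω]
    (S : Finset Ω) (si sj : Ω) (hsi : si ∈ S) (hsj : sj ∈ S)
    (θ : Ω → ℝ)
    (phat : Ω → ℝ) (hphat1 : ∑ ω : Ω, phat ω = 1)
    (ψ : (Ω → ℝ) → ℝ)
    (hψ : ∀ ϑ : Ω → ℝ,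
      ψ ϑ = Real.log (∑ ω : Ω, Real.exp (∑ s ∈ S.filter (fun s => s ≤ ω), ϑ s)))
    (p : (Ω → ℝ) → Ω → ℝ)
    (hp : ∀ ϑ ω, p ϑ ω = Real.exp ((∑ s ∈ S.filter (fun s => s ≤ ω), ϑ s) - ψ ϑ))
    (KL : (Ω → ℝ) → ℝ)
    (hKL : ∀ ϑ : Ω → ℝ, KL ϑ = ∑ ω : Ω, phat ω * Real.log (phat ω / p ϑ ω))
    (η : Ω → ℝ)
    (hη : ∀ s, η s = ∑ ω ∈ Finset.univ.filter (fun ω => s ≤ ω), p θ ω) :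
    HasDerivAt
      (fun y : ℝ => deriv
        (fun x : ℝ => KL (θ + x • (Pi.single si 1 : Ω → ℝ) + y • (Pi.single sj 1 : Ω → ℝ))) 0)
      ((∑ ω ∈ Finset.univ.filter (fun ω => si ≤ ω ∧ sj ≤ ω), p θ ω) - η si * η sj)
      0 := by
  set a : Ω → ℝ := fun ω => ∑ s ∈ S.filter (· ≤ ω), θ s
  set u : Ω → ℝ := fun ω => if si ≤ ω then 1 else 0
  set v : Ω → ℝ := fun ω => if sj ≤ ω then 1 else 0
  have hKL_plane : ∀ x y, KL (θ + x • (Pi.single si 1 : Ω → ℝ) + y • (Pi.single sj 1 : Ω → ℝ))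
      = ∑ ω, phat ω * log (phat ω) - ∑ ω, phat ω * ((a ω + y * v ω) + x * u ω)
        + log (∑ ω, exp ((a ω + y * v ω) + x * u ω)) := by
    intro x y
    simp only [hKL, hp, hψ, sum_filter_le_add_smul_single hsi hsj]
    exact sum_mul_log_div_exp_sub _ hphat1
  have hpθ : ∀ ω, p θ ω = exp (a ω) / ∑ ω', exp (a ω') := by
    intro ω
    rw [hp, hψ, exp_sub, exp_log (sum_exp_pos a)]
  have hsum_filter : ∀ (P : Ω → Prop) [DecidablePred P],
      ∑ ω ∈ univ.filter P, p θ ω = gibbsMean a (fun ω => if P ω then 1 else 0) := by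
    intro P _
    simp only [hpθ, gibbsMean_ite]
  have hcorr : (fun ω => if si ≤ ω ∧ sj ≤ ω then (1 : ℝ) else 0) = u * v := by
    ext ω
    simp only [u, v, Pi.mul_apply, ite_zero_mul_ite_zero, mul_one]
  simp only [hKL_plane, deriv_sub_sum_mul_add_log_sum_exp, hη, hsum_filter, hcorr]
  exact (hasDerivAt_gibbsMean a u v).sub_const _

/-- The second partial derivatives of the KL divergence from `p̂` to the
log-linear model give the Fisher information: the mixed second partial
derivative of the KL divergence with respect to the parameters `θ(s_i)` and
`θ(s_j)`, taken at the current parameter `θ` (i.e. at `(θ(s_i), θ(s_j))`),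
equals `g_{ij} = Σ_{ω ≥ s_i, ω ≥ s_j} p(ω; θ) − η_θ(s_i) η_θ(s_j)`. -/
theorem second_deriv_KL_eq_fisher_information
    {Ω : Type*} [Fintype Ω] [Nonempty Ω] [PartialOrder Ω]
    (S : Finset Ω) (si sj : Ω) (hsi : si ∈ S) (hsj : sj ∈ S)
    (θ : Ω → ℝ) (hθ : ∀ s ∉ S, θ s = 0)
    (phat : Ω → ℝ) (hphat0 : ∀ ω, 0 ≤ phat ω) (hphat1 : ∑ ω : Ω, phat ω = 1)
    (ψ : (Ω → ℝ) → ℝ)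
    (hψ : ∀ ϑ : Ω → ℝ,
      ψ ϑ = Real.log (∑ ω : Ω, Real.exp (∑ s ∈ S.filter (fun s => s ≤ ω), ϑ s)))
    (p : (Ω → ℝ) → Ω → ℝ)
    (hp : ∀ ϑ ω, p ϑ ω = Real.exp ((∑ s ∈ S.filter (fun s => s ≤ ω), ϑ s) - ψ ϑ))
    (KL : (Ω → ℝ) → ℝ)
    (hKL : ∀ ϑ : Ω → ℝ, KL ϑ = ∑ ω : Ω, phat ω * Real.log (phat ω / p ϑ ω))
    (η : Ω → ℝ)
    (hη : ∀ s, η s = ∑ ω ∈ Finset.univ.filter (fun ω => s ≤ ω), p θ ω) :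
    HasDerivAt
      (fun y : ℝ => deriv
        (fun x : ℝ => KL (θ + x • (Pi.single si 1 : Ω → ℝ) + y • (Pi.single sj 1 : Ω → ℝ))) 0)
      ((∑ ω ∈ Finset.univ.filter (fun ω => si ≤ ω ∧ sj ≤ ω), p θ ω) - η si * η sj)
      0 :=
  second_deriv_KL_eq_fisher_information_general S si sj hsi hsj θ phat hphat1 ψ hψ p hp KL hKL η hη
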